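/- Let S be a finite p-group. If K and L are normal subgroups of S each admitting a chain of normal subgroups of S satisfying Oliver's condition (∗) (i.e., 1 = Q₀ ≤ ⋯ ≤ Qₙ = K with Qᵢ ⊴ S and [Ω₁(C_S(Q_{i-1})), Qᵢ; p-1] = 1, and similarly 1 = R₀ ≤ ⋯ ≤ R_m = L), then the product KL admits such a chain, namely 1 = Q₀ ≤ ⋯ ≤ Qₙ = K ≤ KR₁ ≤ ⋯ ≤ KR_m = KL. -/

import Mathlib

/-- Iterated commutator of subgroups: `[A,B;0] = A`, `[A,B;k+1] = ⁅[A,B;k], B⁆`,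
so `[A,B;1] = ⁅A,B⁆` and `[A,B;k] = [[A,B;k-1],B]`. -/
def iterCommutator {G : Type*} [Group G] (A B : Subgroup G) : ℕ → Subgroup G
  | 0 => A
  | k + 1 => ⁅iterCommutator A B k, B⁆

/-- `Ω₁(P)`: the subgroup generated by the elements of `P` of order dividing `p`. -/
def Omega1 {G : Type*} [Group G] (p : ℕ) (P : Subgroup G) : Subgroup G :=
  Subgroup.closure {x | x ∈ P ∧ x ^ p = 1}

/-- Oliver's condition (∗) for a chain `⊥ = Q 0 ≤ Q 1 ≤ ⋯ ≤ Q n` of normal subgroups: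
`[Ω₁(C_G(Q i)), Q (i+1); p-1] = 1` for all `i < n`. -/
def IsOliverChain {G : Type*} [Group G] (p : ℕ) (Q : ℕ → Subgroup G) (n : ℕ) : Prop :=
  Q 0 = ⊥ ∧ (∀ i < n, Q i ≤ Q (i + 1)) ∧ (∀ i ≤ n, (Q i).Normal) ∧
    ∀ i < n,
      iterCommutator (Omega1 p (Subgroup.centralizer (Q i : Set G))) (Q (i + 1)) (p - 1) = ⊥

/-- A (normal) subgroup `K` admits a chain witnessing Oliver's condition (∗). -/
def HasOliverChain {G : Type*} [Group G] (p : ℕ) (K : Subgroup G) : Prop :=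
  ∃ n Q, IsOliverChain p Q n ∧ Q n = K

/-- The Oliver subgroup `𝔛(G)`: the largest normal subgroup of `G` admitting a chain of
`G`-normal subgroups satisfying Oliver's condition (∗). -/
def OliverSubgroup (p : ℕ) (G : Type*) [Group G] : Subgroup G :=
  sSup {K | HasOliverChain p K}

/-- `E` is an elementary abelian `p`-subgroup. -/
def IsElemAbelian {G : Type*} [Group G] (p : ℕ) (E : Subgroup G) : Prop :=
  (∀ a ∈ E, ∀ b ∈ E, a * b = b * a) ∧ ∀ x ∈ E, x ^ p = 1

/-- The rank of a finite elementary abelian `p`-subgroup `E` (so `|E| = p ^ elemRank p E`). -/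
noncomputable def elemRank {G : Type*} [Group G] (p : ℕ) (E : Subgroup G) : ℕ :=
  (Nat.card E).factorization p

/-- The `p`-rank of `G`: the maximal rank of an elementary abelian `p`-subgroup. -/
noncomputable def pRank (p : ℕ) (G : Type*) [Group G] : ℕ :=
  sSup {n | ∃ E : Subgroup G, IsElemAbelian p E ∧ elemRank p E = n}

/-- The Thompson subgroup `J(G)`, generated by all elementary abelian `p`-subgroups of
rank equal to the `p`-rank of `G`. -/
def Thompson (p : ℕ) (G : Type*) [Group G] : Subgroup G :=
  sSup {E | IsElemAbelian p E ∧ elemRank p E = pRank p G}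

/-!
Along the second half of the chain one compares `A = Ω₁(C_S(K R_j))` with `Ω₁(C_S(R_j))`:
`A` is contained in the latter and centralizes `K`, so, all groups involved being normal,
`[A, K R_{j+1}; k] ≤ [A, R_{j+1}; k] ≤ [Ω₁(C_S(R_j)), R_{j+1}; k]` for every `k`.
-/

open Subgroup

section OliverChain

variable {G : Type*} [Group G]

lemma Omega1_le (p : ℕ) (P : Subgroup G) : Omega1 p P ≤ P :=
  (closure_le _).mpr fun _ hx => hx.1

lemma Omega1_mono (p : ℕ) {P P' : Subgroup G} (h : P ≤ P') : Omega1 p P ≤ Omega1 p P' :=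
  closure_mono fun _ hx => ⟨h hx.1, hx.2⟩

instance Omega1.normal (p : ℕ) (P : Subgroup G) [hP : P.Normal] : (Omega1 p P).Normal :=
  ⟨fun _ hx g => (closure_le ((Omega1 p P).comap (MulAut.conj g).toMonoidHom)).mpr
    (fun y hy => subset_closure ⟨hP.conj_mem y hy.1 g, by rw [← map_pow, hy.2, map_one]⟩)
    hx⟩

instance iterCommutator.normal (A B : Subgroup G) [A.Normal] [B.Normal] (k : ℕ) :
    (iterCommutator A B k).Normal := by
  induction k with
  | zero => assumption
  | succ k ih => exact commutator_normal _ _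

lemma iterCommutator_mono_left {A A' : Subgroup G} (h : A ≤ A') (B : Subgroup G) (k : ℕ) :
    iterCommutator A B k ≤ iterCommutator A' B k := by
  induction k with
  | zero => exact h
  | succ k ih => exact commutator_mono ih le_rfl

lemma iterCommutator_le_left (A B : Subgroup G) [A.Normal] (k : ℕ) : iterCommutator A B k ≤ A := by
  induction k with
  | zero => exact le_rfl
  | succ k ih => exact (commutator_mono ih le_rfl).trans (commutator_le_left A B)

open scoped commutatorElement in
lemma commutator_sup_le_of_le_centralizer {H K B N : Subgroup G} [B.Normal] [hN : N.Normal]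
    (hHK : H ≤ centralizer (K : Set G)) (hHB : ⁅H, B⁆ ≤ N) : ⁅H, K ⊔ B⁆ ≤ N := by
  rw [commutator_le]
  intro h hh x hx
  obtain ⟨k, hk, b, hb, rfl⟩ := mem_sup_of_normal_right.mp hx
  have hkh : k * h = h * k := mem_centralizer_iff.mp (hHK hh) k hk
  have : ⁅h, k * b⁆ = k * ⁅h, b⁆ * k⁻¹ := by
    simp only [commutatorElement_def]
    rw [← mul_assoc h k, ← hkh]
    group
  rw [this]
  exact hN.conj_mem _ (hHB (commutator_mem_commutator hh hb)) k

lemma iterCommutator_sup_right_le {A K : Subgroup G} (B : Subgroup G) [A.Normal] [B.Normal]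
    (hAK : A ≤ centralizer (K : Set G)) (k : ℕ) :
    iterCommutator A (K ⊔ B) k ≤ iterCommutator A B k := by
  induction k with
  | zero => exact le_rfl
  | succ k ih =>
    exact (commutator_mono ih le_rfl).trans <| commutator_sup_le_of_le_centralizer
      ((iterCommutator_le_left A B k).trans hAK) le_rfl

lemma iterCommutator_Omega1_centralizer_sup_eq_bot (p k : ℕ) {K P B : Subgroup G}
    [K.Normal] [P.Normal] [B.Normal]
    (h : iterCommutator (Omega1 p (centralizer (P : Set G))) B k = ⊥) :
    iterCommutator (Omega1 p (centralizer ((K ⊔ P : Subgroup G) : Set G))) (K ⊔ B) k = ⊥ := by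
  refine eq_bot_iff.mpr ?_
  calc iterCommutator (Omega1 p (centralizer ((K ⊔ P : Subgroup G) : Set G))) (K ⊔ B) k
      ≤ iterCommutator (Omega1 p (centralizer ((K ⊔ P : Subgroup G) : Set G))) B k :=
        iterCommutator_sup_right_le B
          ((Omega1_le p _).trans (centralizer_le (SetLike.coe_subset_coe.mpr le_sup_left))) k
    _ ≤ iterCommutator (Omega1 p (centralizer (P : Set G))) B k :=
        iterCommutator_mono_left
          (Omega1_mono p (centralizer_le (SetLike.coe_subset_coe.mpr le_sup_right))) B k
    _ = ⊥ := h

end OliverChain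

section SeqAppend

variable {α : Type*} {a b : ℕ → α} {n m : ℕ}

def seqAppend (a b : ℕ → α) (n : ℕ) : ℕ → α := fun i => if i ≤ n then a i else b (i - n)

lemma seqAppend_of_le {i : ℕ} (h : i ≤ n) : seqAppend a b n i = a i := if_pos h

lemma seqAppend_of_ge (hab : b 0 = a n) {i : ℕ} (h : n ≤ i) : seqAppend a b n i = b (i - n) := by
  unfold seqAppend
  split_ifs with h'
  · obtain rfl : i = n := le_antisymm h' h
    rw [Nat.sub_self, hab]
  · rfl

lemma seqAppend_add (hab : b 0 = a n) : seqAppend a b n (n + m) = b m := by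
  rw [seqAppend_of_ge hab (Nat.le_add_right n m), Nat.add_sub_cancel_left]

lemma seqAppend_forall_le {P : α → Prop} (ha : ∀ i ≤ n, P (a i)) (hb : ∀ j ≤ m, P (b j)) :
    ∀ i ≤ n + m, P (seqAppend a b n i) := by
  intro i hi
  unfold seqAppend
  split_ifs with h
  · exact ha i h
  · exact hb (i - n) (by omega)

lemma seqAppend_forall_lt_succ {r : α → α → Prop} (hab : b 0 = a n)
    (ha : ∀ i < n, r (a i) (a (i + 1))) (hb : ∀ j < m, r (b j) (b (j + 1))) :
    ∀ i < n + m, r (seqAppend a b n i) (seqAppend a b n (i + 1)) := by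
  intro i hi
  rcases le_or_gt (i + 1) n with h | h
  · rw [seqAppend_of_le h, seqAppend_of_le (Nat.le_of_succ_le h)]
    exact ha i h
  · rw [seqAppend_of_ge hab (by omega), seqAppend_of_ge hab (by omega),
      show i + 1 - n = i - n + 1 by omega]
    exact hb (i - n) (by omega)

end SeqAppend

theorem product_chain_general (p : ℕ) (S : Type*) [Group S]
    (K L : Subgroup S) (hK : K.Normal)
    (n m : ℕ) (Q R : ℕ → Subgroup S)
    (hQ : IsOliverChain p Q n) (hQn : Q n = K)
    (hR : IsOliverChain p R m) (hRm : R m = L) :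
    IsOliverChain p (fun i => if i ≤ n then Q i else K ⊔ R (i - n)) (n + m) ∧
      (fun i => if i ≤ n then Q i else K ⊔ R (i - n)) (n + m) = K ⊔ L := by
  obtain ⟨hQ0, hQle, hQnormal, hQcomm⟩ := hQ
  obtain ⟨hR0, hRle, hRnormal, hRcomm⟩ := hR
  have hKR : K ⊔ R 0 = Q n := by rw [hR0, sup_bot_eq, hQn]
  change IsOliverChain p (seqAppend Q (fun j => K ⊔ R j) n) (n + m) ∧
    seqAppend Q (fun j => K ⊔ R j) n (n + m) = K ⊔ L
  refine ⟨⟨?_, ?_, ?_, ?_⟩, by rw [seqAppend_add hKR, hRm]⟩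
  · rw [seqAppend_of_le (Nat.zero_le n), hQ0]
  · exact seqAppend_forall_lt_succ hKR hQle fun j hj => sup_le_sup_left (hRle j hj) K
  · exact seqAppend_forall_le hQnormal fun j hj => have := hRnormal j hj; inferInstance
  · refine seqAppend_forall_lt_succ (r := fun A B : Subgroup S =>
      iterCommutator (Omega1 p (centralizer (A : Set S))) B (p - 1) = ⊥) hKR hQcomm ?_
    intro j hj
    have := hRnormal j hj.le
    have := hRnormal (j + 1) hj
    exact iterCommutator_Omega1_centralizer_sup_eq_bot p (p - 1) (hRcomm j hj)

/-- if normal subgroups `K` and `L` of `S` each admit a chain satisfying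
Oliver's condition (∗), then so does `KL`, namely the concatenated chain
`⊥ = Q 0 ≤ ⋯ ≤ Q n = K ≤ K(R 1) ≤ ⋯ ≤ K(R m) = KL`. -/
theorem product_chain (p : ℕ) [Fact p.Prime] (S : Type*) [Group S] [Fintype S]
    (hS : IsPGroup p S) (K L : Subgroup S) (hK : K.Normal) (hL : L.Normal)
    (n m : ℕ) (Q R : ℕ → Subgroup S)
    (hQ : IsOliverChain p Q n) (hQn : Q n = K)
    (hR : IsOliverChain p R m) (hRm : R m = L) :
    IsOliverChain p (fun i => if i ≤ n then Q i else K ⊔ R (i - n)) (n + m) ∧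
      (fun i => if i ≤ n then Q i else K ⊔ R (i - n)) (n + m) = K ⊔ L :=
  product_chain_general p S K L hK n m Q R hQ hQn hR hRm
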